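/- Let f : ℝⁿ → ℝ be C¹-smooth and let (x^k) ⊂ ℝⁿ satisfy, for all sufficiently large k and some constants α, β > 0, the conditions f(x^k) − f(x^{k+1}) ≥ α‖x^{k+1} − x^k‖² and ‖∇f(x^k)‖ ≤ β‖x^{k+1} − x^k‖. Suppose x̄ is an accumulation point of (x^k) and f satisfies the exponential PLK condition at x̄ with exponent q ∈ (0,1) and constant M > 0. Then: (i) if q ∈ (0,1/2), the sequence terminates at x̄ in finitely many steps, i.e., there is N with x^k = x̄ for all k ≥ N; (ii) if q = 1/2, there exist C > 0 and c ∈ (0,1) with ‖x^k − x̄‖ ≤ C·c^k for all k; (iii) if q ∈ (1/2,1), there exists C > 0 with ‖x^k − x̄‖ ≤ C·k^{−(1−q)/(2q−1)} for all sufficiently large k. -/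

import Mathlib

/-!
Write `r k = f (x k) - f xb`. Sufficient decrease makes `r` nonincreasing, so `r k ↓ 0` because
`xb` is a cluster point. While `x k` stays near `xb`, the PLK inequality combined with the two
descent conditions gives
* `‖x (k + 1) - x k‖ ≤ D k - D (k + 1)` with `D k = β / α * M * r k ^ (1 - q)`, by concavity of
  `t ↦ t ^ (1 - q)`; this finite-length estimate keeps the iterates near `xb` once one of them is
  close enough, and then yields `‖x k - xb‖ ≤ D k`;
* `r k ^ (2 * q) ≤ A * (r k - r (k + 1))` with `A = (M * (1 - q) * β) ^ 2 / α`.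

The three rates are the three regimes of this recursion: for `2 * q < 1` it forces `r k = 0` from
some point on, for `2 * q = 1` it is a linear contraction, and for `2 * q > 1` the quantity
`r k ^ (1 - 2 * q)` grows at least linearly in `k`.
-/

open Set Filter Topology

/-- The exponential PLK condition for `f` at `x₀` with exponent `q` and constant `M`:
the PLK condition holds with desingularizing function `φ t = M * t ^ (1 - q)`, whose
derivative is `M * (1 - q) * t ^ (-q)`. -/
def ExpPLKCondition {n : ℕ} (f : EuclideanSpace ℝ (Fin n) → ℝ)
    (x₀ : EuclideanSpace ℝ (Fin n)) (M q : ℝ) : Prop :=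
  ∃ (η : ℝ) (U : Set (EuclideanSpace ℝ (Fin n))),
    0 < η ∧ U ∈ nhds x₀ ∧
    ∀ x ∈ U, f x₀ < f x → f x < f x₀ + η →
      1 ≤ M * (1 - q) * (f x - f x₀) ^ (-q : ℝ) * ‖gradient f x‖

theorem mul_rpow_sub_one_mul_sub_le_rpow_sub_rpow {a b s : ℝ} (ha : 0 < a) (hb : 0 ≤ b)
    (hs₀ : 0 ≤ s) (hs₁ : s ≤ 1) : s * a ^ (s - 1) * (a - b) ≤ a ^ s - b ^ s := by
  have hbern := rpow_one_add_le_one_add_mul_self (s := b / a - 1)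
    (by linarith [div_nonneg hb ha.le]) hs₀ hs₁
  rw [add_sub_cancel, Real.div_rpow hb ha.le, div_le_iff₀ (Real.rpow_pos_of_pos ha s)] at hbern
  rw [Real.rpow_sub_one ha.ne']
  have : s * (a ^ s / a) * (a - b) = a ^ s - (1 + s * (b / a - 1)) * a ^ s := by
    field_simp
    ring
  linarith

theorem eventually_eq_zero_of_rpow_le_mul_sub {r : ℕ → ℝ} {p A : ℝ} (hp : p < 1) (hA : 0 ≤ A)
    (hr₀ : ∀ᶠ k in atTop, 0 ≤ r k) (hrec : ∀ᶠ k in atTop, r k ^ p ≤ A * (r k - r (k + 1)))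
    (hr : Tendsto r atTop (𝓝 0)) : ∀ᶠ k in atTop, r k = 0 := by
  have hsmall : Tendsto (fun k ↦ A * r k ^ (1 - p)) atTop (𝓝 0) := by
    simpa [Real.zero_rpow (sub_pos.2 hp).ne'] using
      (hr.rpow_const (Or.inr (sub_pos.2 hp).le)).const_mul A
  filter_upwards [hr₀, (tendsto_add_atTop_nat 1).eventually hr₀, hrec,
    hsmall.eventually (gt_mem_nhds one_pos)] with k hk hk₁ hrec hlt
  by_contra hne
  have hpos : 0 < r k := lt_of_le_of_ne hk (Ne.symm hne)
  refine lt_irrefl (r k) (calc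
    r k = r k ^ p * r k ^ (1 - p) := by rw [← Real.rpow_add hpos, add_sub_cancel, Real.rpow_one]
    _ ≤ A * r k * r k ^ (1 - p) := by gcongr; nlinarith
    _ = r k * (A * r k ^ (1 - p)) := by ring
    _ < r k * 1 := by gcongr
    _ = r k := mul_one _)

theorem exists_le_geometric_of_le_mul_sub {r : ℕ → ℝ} {A : ℝ} {N : ℕ} (hA : 0 < A)
    (hr₀ : ∀ k ≥ N, 0 ≤ r k) (hrec : ∀ k ≥ N, r k ≤ A * (r k - r (k + 1))) :
    ∃ C ≥ 0, ∃ c ∈ Ioo (0 : ℝ) 1, ∀ k ≥ N, r k ≤ C * c ^ k := by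
  -- the `max` keeps `c` positive when `A ≤ 1`
  set c := max (1 - A⁻¹) (1 / 2)
  have hc₀ : 0 < c := lt_max_of_lt_right one_half_pos
  have hc₁ : c < 1 := max_lt (by linarith [inv_pos.2 hA]) one_half_lt_one
  have hstep : ∀ k ≥ N, r (k + 1) ≤ c * r k := fun k hk ↦ calc
    r (k + 1) ≤ (1 - A⁻¹) * r k := by
      have := hrec k hk
      field_simp
      linarith
    _ ≤ c * r k := by gcongr; exacts [hr₀ k hk, le_max_left _ _]
  refine ⟨r N / c ^ N, div_nonneg (hr₀ N le_rfl) (by positivity), c, ⟨hc₀, hc₁⟩, ?_⟩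
  intro k hk
  induction k, hk using Nat.le_induction with
  | base => rw [div_mul_cancel₀ _ (by positivity)]
  | succ k hk ih => calc
      r (k + 1) ≤ c * r k := hstep k hk
      _ ≤ c * (r N / c ^ N * c ^ k) := by gcongr
      _ = r N / c ^ N * c ^ (k + 1) := by ring

theorem div_le_rpow_sub_rpow_of_rpow_le_mul_sub {a b p A : ℝ} (hb : 0 < b) (hba : b ≤ a)
    (hp₁ : 1 < p) (hp₂ : p ≤ 2) (hA : 0 < A) (hrec : a ^ p ≤ A * (a - b)) :
    (p - 1) / A ≤ b ^ (1 - p) - a ^ (1 - p) := by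
  have ha : 0 < a := hb.trans_le hba
  set t := p - 1
  have hconc := mul_rpow_sub_one_mul_sub_le_rpow_sub_rpow ha hb.le (s := t) (by linarith)
    (by linarith)
  have hmono : b ^ t ≤ a ^ t := Real.rpow_le_rpow hb.le hba (by linarith)
  have hsq : a ^ (t - 1) * a ^ p = a ^ t * a ^ t := by
    rw [← Real.rpow_add ha, ← Real.rpow_add ha]; congr 1; ring
  have key : t / A * (a ^ t * b ^ t) ≤ a ^ t - b ^ t := calc
    t / A * (a ^ t * b ^ t) ≤ t / A * (a ^ t * a ^ t) := by gcongr
    _ = t / A * (a ^ (t - 1) * a ^ p) := by rw [hsq]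
    _ ≤ t / A * (a ^ (t - 1) * (A * (a - b))) := by gcongr
    _ = t * a ^ (t - 1) * (a - b) := by field_simp
    _ ≤ a ^ t - b ^ t := hconc
  have hneg : ∀ y : ℝ, 0 < y → y ^ (1 - p) = (y ^ t)⁻¹ := fun y hy ↦ by
    rw [← Real.rpow_neg hy.le]; congr 1; ring
  rw [hneg a ha, hneg b hb, inv_sub_inv (by positivity) (by positivity),
    le_div_iff₀ (by positivity)]
  linarith

theorem exists_le_rpow_of_rpow_le_mul_sub {r : ℕ → ℝ} {p A : ℝ} {N : ℕ} (hp₁ : 1 < p)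
    (hp₂ : p ≤ 2) (hA : 0 < A) (hr₀ : ∀ k ≥ N, 0 ≤ r k)
    (hrec : ∀ k ≥ N, r k ^ p ≤ A * (r k - r (k + 1))) :
    ∃ C > 0, ∀ᶠ k : ℕ in atTop, r k ≤ C * (k : ℝ) ^ (1 - p)⁻¹ := by
  set μ := (p - 1) / A
  have hμ : 0 < μ := div_pos (by linarith) hA
  have hanti : ∀ k ≥ N, r (k + 1) ≤ r k := fun k hk ↦ by
    nlinarith [hrec k hk, Real.rpow_nonneg (hr₀ k hk) p]
  have hgrow : ∀ k ≥ N, 0 < r k → μ * (k - N) ≤ r k ^ (1 - p) := by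
    intro k hk
    induction k, hk using Nat.le_induction with
    | base => intro hpos; simpa using (Real.rpow_pos_of_pos hpos _).le
    | succ k hk ih =>
      intro hpos
      have hstep := div_le_rpow_sub_rpow_of_rpow_le_mul_sub hpos (hanti k hk) hp₁ hp₂ hA (hrec k hk)
      have := ih (hpos.trans_le (hanti k hk))
      push_cast
      linarith
  refine ⟨(μ / 2) ^ (1 - p)⁻¹, by positivity, ?_⟩
  filter_upwards [eventually_ge_atTop (2 * N + 1)] with k hk
  rcases (hr₀ k (by omega)).eq_or_lt with hzero | hpos
  · rw [← hzero]; positivity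
  have hk' : (2 * N + 1 : ℝ) ≤ k := by exact_mod_cast hk
  have hlow : μ / 2 * k ≤ r k ^ (1 - p) := by
    nlinarith [hgrow k (by omega) hpos]
  calc r k = (r k ^ (1 - p)) ^ (1 - p)⁻¹ := (Real.rpow_rpow_inv hpos.le (by linarith)).symm
    _ ≤ (μ / 2 * k) ^ (1 - p)⁻¹ :=
      Real.rpow_le_rpow_of_nonpos (mul_pos (half_pos hμ) (by linarith)) hlow
        (inv_nonpos.2 (by linarith))
    _ = (μ / 2) ^ (1 - p)⁻¹ * (k : ℝ) ^ (1 - p)⁻¹ := Real.mul_rpow (by positivity) (by positivity)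

theorem exists_forall_le_mul_pow_of_eventually {u : ℕ → ℝ} {C c : ℝ} (hc : 0 < c)
    (h : ∀ᶠ k in atTop, u k ≤ C * c ^ k) : ∃ C' > 0, ∀ k, u k ≤ C' * c ^ k := by
  obtain ⟨B, hB⟩ := (isBoundedUnder_of_eventually_le (f := atTop) (u := fun k ↦ u k / c ^ k)
    (h.mono fun k hk ↦ (div_le_iff₀ (pow_pos hc k)).2 hk)).bddAbove_range
  refine ⟨max B 1, by positivity, fun k ↦ ?_⟩
  have := hB (mem_range_self k)
  rw [← div_le_iff₀ (pow_pos hc k)]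
  exact this.trans (le_max_left _ _)

section AntitoneClusterPt

variable {α : Type*} [TopologicalSpace α] [LinearOrder α] {u : ℕ → α} {a : α} {N : ℕ}

theorem MapClusterPt.le_of_antitoneOn [ClosedIicTopology α] (ha : MapClusterPt a atTop u)
    (hu : AntitoneOn u (Ici N)) : ∀ k ≥ N, a ≤ u k := fun k hk ↦
  isClosed_Iic.mem_of_mapClusterPt ha <| (eventually_ge_atTop k).mono fun _ hm ↦
    hu (mem_Ici.2 hk) (mem_Ici.2 (hk.trans hm)) hm

theorem MapClusterPt.tendsto_of_antitoneOn [OrderTopology α] (ha : MapClusterPt a atTop u)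
    (hu : AntitoneOn u (Ici N)) : Tendsto u atTop (𝓝 a) := by
  refine tendsto_order.2 ⟨fun b hb ↦ ?_, fun b hb ↦ ?_⟩
  · filter_upwards [eventually_ge_atTop N] with k hk using hb.trans_le (ha.le_of_antitoneOn hu k hk)
  · obtain ⟨m, hmb, hm⟩ := ((ha.frequently (Iio_mem_nhds hb)).and_eventually
      (eventually_ge_atTop N)).exists
    filter_upwards [eventually_ge_atTop m] with k hk
    exact (hu (mem_Ici.2 hm) (mem_Ici.2 (hm.trans hk)) hk).trans_lt hmb

end AntitoneClusterPt

section FiniteLength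

variable {X : Type*} [PseudoMetricSpace X] {x : ℕ → X} {D : ℕ → ℝ} {y : X} {k₀ : ℕ}

theorem dist_add_le_of_dist_succ_le_sub {ρ : ℝ} (hD : ∀ k ≥ k₀, 0 ≤ D k)
    (hstep : ∀ k ≥ k₀, dist (x k) y ≤ ρ → dist (x k) (x (k + 1)) ≤ D k - D (k + 1))
    (h₀ : dist (x k₀) y + D k₀ ≤ ρ) : ∀ k ≥ k₀, dist (x k) y + D k ≤ ρ := by
  intro k hk
  induction k, hk using Nat.le_induction with
  | base => exact h₀
  | succ k hk ih =>
    have := hstep k hk (by linarith [hD k hk])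
    linarith [dist_triangle_left (x (k + 1)) y (x k)]

theorem dist_le_sub_of_dist_succ_le_sub
    (hstep : ∀ k ≥ k₀, dist (x k) (x (k + 1)) ≤ D k - D (k + 1)) :
    ∀ k ≥ k₀, ∀ m ≥ k, dist (x k) (x m) ≤ D k - D m := by
  intro k hk m hm
  induction m, hm using Nat.le_induction with
  | base => simp
  | succ m hm ih => linarith [hstep m (hk.trans hm), dist_triangle (x k) (x m) (x (m + 1))]

theorem MapClusterPt.dist_le_of_dist_succ_le_sub (hy : MapClusterPt y atTop x)
    (hD : ∀ k ≥ k₀, 0 ≤ D k) (hstep : ∀ k ≥ k₀, dist (x k) (x (k + 1)) ≤ D k - D (k + 1)) :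
    ∀ k ≥ k₀, dist (x k) y ≤ D k := fun k hk ↦ by
  rw [dist_comm, ← Metric.mem_closedBall]
  refine Metric.isClosed_closedBall.mem_of_mapClusterPt hy ?_
  filter_upwards [eventually_ge_atTop k] with m hm
  rw [Metric.mem_closedBall, dist_comm]
  linarith [dist_le_sub_of_dist_succ_le_sub hstep k hk m hm, hD m (hk.trans hm)]

theorem MapClusterPt.eventually_mem_and_dist_le {U : Set X} (hy : MapClusterPt y atTop x)
    (hU : U ∈ 𝓝 y) (hD : ∀ᶠ k in atTop, 0 ≤ D k) (hDlim : Tendsto D atTop (𝓝 0))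
    (hstep : ∀ᶠ k in atTop, x k ∈ U → dist (x k) (x (k + 1)) ≤ D k - D (k + 1)) :
    ∀ᶠ k in atTop, x k ∈ U ∧ dist (x k) y ≤ D k := by
  -- Start at an iterate with `dist (x k₀) y + D k₀ < ρ`: from then on `dist (x k) y + D k`
  -- cannot increase, so the iterates stay in the closed `ρ`-ball inside `U`.
  obtain ⟨ρ, hρ, hρU⟩ := Metric.nhds_basis_closedBall.mem_iff.1 hU
  obtain ⟨k₁, hk₁⟩ := eventually_atTop.1 (hD.and hstep)
  obtain ⟨k₀, hx₀, hk₀, hD₀⟩ :=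
    ((hy.frequently (Metric.ball_mem_nhds y (half_pos hρ))).and_eventually
      ((eventually_ge_atTop k₁).and (hDlim.eventually (gt_mem_nhds (half_pos hρ))))).exists
  have hk₀' : ∀ k ≥ k₀, 0 ≤ D k ∧ (x k ∈ U → dist (x k) (x (k + 1)) ≤ D k - D (k + 1)) :=
    fun k hk ↦ hk₁ k (hk₀.trans hk)
  have htrap := dist_add_le_of_dist_succ_le_sub (fun k hk ↦ (hk₀' k hk).1)
    (fun k hk hkρ ↦ (hk₀' k hk).2 (hρU (Metric.mem_closedBall.2 hkρ)))
    (by linarith [Metric.mem_ball.1 hx₀])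
  have hxU : ∀ k ≥ k₀, x k ∈ U := fun k hk ↦
    hρU (Metric.mem_closedBall.2 (by linarith [htrap k hk, (hk₀' k hk).1]))
  filter_upwards [eventually_ge_atTop k₀] with k hk
  exact ⟨hxU k hk, hy.dist_le_of_dist_succ_le_sub (fun k hk ↦ (hk₀' k hk).1)
    (fun k hk ↦ (hk₀' k hk).2 (hxU k hk)) k hk⟩

end FiniteLength

section PLKStep

variable {α β M q a b d g : ℝ}

theorem le_mul_rpow_sub_mul_rpow_of_plk (hα : 0 < α) (hβ : 0 < β) (hM : 0 ≤ M)
    (hq : q ∈ Icc (0 : ℝ) 1) (hb : 0 ≤ b) (hd : 0 ≤ d) (hdec : α * d ^ 2 ≤ a - b)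
    (hg : g ≤ β * d) (hPLK : 0 < a → 1 ≤ M * (1 - q) * a ^ (-q) * g) :
    d ≤ β / α * M * a ^ (1 - q) - β / α * M * b ^ (1 - q) := by
  rcases (show 0 ≤ a by nlinarith).eq_or_lt with rfl | ha
  · obtain rfl : b = 0 := by nlinarith
    simp only [sub_self]
    by_contra! h
    nlinarith [mul_pos hα (mul_pos h h)]
  set c := M * (1 - q) * a ^ (-q)
  have hc : 0 ≤ c := mul_nonneg (mul_nonneg hM (by linarith [hq.2])) (by positivity)
  have hcβd : 1 ≤ c * β * d := by nlinarith [hPLK ha]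
  calc d ≤ d * (c * β * d) := le_mul_of_one_le_right hd hcβd
    _ = β / α * c * (α * d ^ 2) := by field_simp
    _ ≤ β / α * c * (a - b) := by gcongr
    _ = β / α * M * ((1 - q) * a ^ (1 - q - 1) * (a - b)) := by rw [sub_sub_cancel_left]; ring
    _ ≤ β / α * M * (a ^ (1 - q) - b ^ (1 - q)) := by
      gcongr
      exact mul_rpow_sub_one_mul_sub_le_rpow_sub_rpow ha hb (by linarith [hq.2])
        (by linarith [hq.1])
    _ = β / α * M * a ^ (1 - q) - β / α * M * b ^ (1 - q) := mul_sub _ _ _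

theorem rpow_two_mul_le_mul_sub_of_plk (hα : 0 < α) (hM : 0 ≤ M) (hq : q ∈ Ioc (0 : ℝ) 1)
    (hb : 0 ≤ b) (hdec : α * d ^ 2 ≤ a - b) (hg : g ≤ β * d)
    (hPLK : 0 < a → 1 ≤ M * (1 - q) * a ^ (-q) * g) :
    a ^ (2 * q) ≤ (M * (1 - q) * β) ^ 2 / α * (a - b) := by
  rcases (show 0 ≤ a by nlinarith).eq_or_lt with rfl | ha
  · obtain rfl : b = 0 := by nlinarith
    rw [Real.zero_rpow (by linarith [hq.1])]
    simp
  have hc : 0 ≤ M * (1 - q) * a ^ (-q) :=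
    mul_nonneg (mul_nonneg hM (by linarith [hq.2])) (by positivity)
  have hpow : a ^ q ≤ M * (1 - q) * β * d := calc
    a ^ q ≤ a ^ q * (M * (1 - q) * a ^ (-q) * (β * d)) :=
      le_mul_of_one_le_right (by positivity) ((hPLK ha).trans (by gcongr))
    _ = M * (1 - q) * β * d * (a ^ q * a ^ (-q)) := by ring
    _ = M * (1 - q) * β * d := by rw [← Real.rpow_add ha, add_neg_cancel, Real.rpow_zero, mul_one]
  calc a ^ (2 * q) = (a ^ q) ^ (2 : ℕ) := by
        rw [← Real.rpow_natCast, ← Real.rpow_mul ha.le, mul_comm, Nat.cast_ofNat]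
    _ ≤ (M * (1 - q) * β * d) ^ 2 := by gcongr
    _ = (M * (1 - q) * β) ^ 2 / α * (α * d ^ 2) := by field_simp
    _ ≤ (M * (1 - q) * β) ^ 2 / α * (a - b) := by gcongr

end PLKStep

section Descent

variable {E : Type*} [NormedAddCommGroup E] {x : ℕ → E} {xb : E}

theorem eventually_rate_recursion_of_plk {f G : E → ℝ} {α β M q η : ℝ} {U : Set E} {N : ℕ}
    (hf : ContinuousAt f xb) (hacc : MapClusterPt xb atTop x) (hα : 0 < α) (hβ : 0 < β)
    (hM : 0 ≤ M) (hq : q ∈ Ioo (0 : ℝ) 1) (hη : 0 < η) (hU : U ∈ 𝓝 xb)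
    (hdec : ∀ k ≥ N, α * ‖x (k + 1) - x k‖ ^ 2 ≤ f (x k) - f (x (k + 1)))
    (hG : ∀ k ≥ N, G (x k) ≤ β * ‖x (k + 1) - x k‖)
    (hPLK : ∀ y ∈ U, f xb < f y → f y < f xb + η →
      1 ≤ M * (1 - q) * (f y - f xb) ^ (-q) * G y) :
    Tendsto (fun k ↦ f (x k) - f xb) atTop (𝓝 0) ∧ ∀ᶠ k in atTop, 0 ≤ f (x k) - f xb ∧
      (f (x k) - f xb) ^ (2 * q) ≤
        (M * (1 - q) * β) ^ 2 / α * ((f (x k) - f xb) - (f (x (k + 1)) - f xb)) ∧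
      ‖x k - xb‖ ≤ β / α * M * (f (x k) - f xb) ^ (1 - q) := by
  set r : ℕ → ℝ := fun k ↦ f (x k) - f xb
  set D : ℕ → ℝ := fun k ↦ β / α * M * r k ^ (1 - q)
  have hdec' : ∀ k ≥ N, α * ‖x (k + 1) - x k‖ ^ 2 ≤ r k - r (k + 1) := fun k hk ↦ by
    simpa [r] using hdec k hk
  have hanti : AntitoneOn r (Ici N) := antitoneOn_nat_Ici_of_succ_le fun k hk ↦ by
    nlinarith [hdec' k hk, sq_nonneg ‖x (k + 1) - x k‖]
  have hcl : MapClusterPt 0 atTop r := by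
    simpa [r, Function.comp_def] using
      hacc.continuousAt_comp (hf.sub (continuousAt_const (y := f xb)))
  have hr₀ := hcl.le_of_antitoneOn hanti
  have hr := hcl.tendsto_of_antitoneOn hanti
  have hstep : ∀ᶠ k in atTop, 0 ≤ r k ∧ 0 ≤ r (k + 1) ∧
      α * ‖x (k + 1) - x k‖ ^ 2 ≤ r k - r (k + 1) ∧ G (x k) ≤ β * ‖x (k + 1) - x k‖ ∧
      (x k ∈ U → 0 < r k → 1 ≤ M * (1 - q) * r k ^ (-q) * G (x k)) := by
    filter_upwards [eventually_ge_atTop N, hr.eventually (gt_mem_nhds hη)] with k hk hkη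
    refine ⟨hr₀ k hk, hr₀ (k + 1) (by omega), hdec' k hk, hG k hk, fun hxU hpos ↦ ?_⟩
    exact hPLK (x k) hxU (by linarith) (by linarith)
  have hlen : ∀ᶠ k in atTop, x k ∈ U → dist (x k) (x (k + 1)) ≤ D k - D (k + 1) := by
    filter_upwards [hstep] with k ⟨_, hr₁, hdk, hGk, hPLKk⟩ hxU
    rw [dist_comm, dist_eq_norm]
    exact le_mul_rpow_sub_mul_rpow_of_plk hα hβ hM (Ioo_subset_Icc_self hq) hr₁
      (norm_nonneg _) hdk hGk (hPLKk hxU)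
  have hD : ∀ᶠ k in atTop, 0 ≤ D k := hstep.mono fun k hk ↦ by have := hk.1; positivity
  have hDlim : Tendsto D atTop (𝓝 0) := by
    simpa [D, Real.zero_rpow (sub_pos.2 hq.2).ne'] using
      (hr.rpow_const (Or.inr (sub_pos.2 hq.2).le)).const_mul (β / α * M)
  refine ⟨hr, ?_⟩
  filter_upwards [hstep, hacc.eventually_mem_and_dist_le hU hD hDlim hlen] with
    k ⟨hrk, hr₁, hdk, hGk, hPLKk⟩ ⟨hxU, hdist⟩
  refine ⟨hrk, rpow_two_mul_le_mul_sub_of_plk hα hM (Ioo_subset_Ioc_self hq) hr₁ hdk hGk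
    (hPLKk hxU), ?_⟩
  rwa [← dist_eq_norm]

variable {r : ℕ → ℝ} {q A K : ℝ}

theorem exists_forall_ge_eq_of_rate_recursion (hq : q < 1 / 2) (hA : 0 ≤ A)
    (hr : Tendsto r atTop (𝓝 0))
    (h : ∀ᶠ k in atTop, 0 ≤ r k ∧ r k ^ (2 * q) ≤ A * (r k - r (k + 1)) ∧
      ‖x k - xb‖ ≤ K * r k ^ (1 - q)) :
    ∃ N, ∀ k ≥ N, x k = xb := by
  have hzero := eventually_eq_zero_of_rpow_le_mul_sub (by linarith) hA (h.mono fun _ hk ↦ hk.1)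
    (h.mono fun _ hk ↦ hk.2.1) hr
  obtain ⟨N, hN⟩ := eventually_atTop.1 (hzero.and h)
  refine ⟨N, fun k hk ↦ ?_⟩
  obtain ⟨hrk, -, -, hxk⟩ := hN k hk
  rw [hrk, Real.zero_rpow (by linarith), mul_zero] at hxk
  exact sub_eq_zero.1 (norm_le_zero_iff.1 hxk)

theorem exists_le_geometric_of_rate_recursion (hq : q = 1 / 2) (hA : 0 < A) (hK : 0 ≤ K)
    (h : ∀ᶠ k in atTop, 0 ≤ r k ∧ r k ^ (2 * q) ≤ A * (r k - r (k + 1)) ∧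
      ‖x k - xb‖ ≤ K * r k ^ (1 - q)) :
    ∃ C > 0, ∃ c ∈ Ioo (0 : ℝ) 1, ∀ k, ‖x k - xb‖ ≤ C * c ^ k := by
  subst hq
  obtain ⟨N, hN⟩ := eventually_atTop.1 h
  obtain ⟨C, hC, c, ⟨hc₀, hc₁⟩, hgeo⟩ := exists_le_geometric_of_le_mul_sub hA
    (fun k hk ↦ (hN k hk).1) (fun k hk ↦ by simpa using (hN k hk).2.1)
  have hsqrt : c ^ (1 - 1 / 2 : ℝ) ∈ Ioo (0 : ℝ) 1 :=
    ⟨by positivity, Real.rpow_lt_one hc₀.le hc₁ (by norm_num)⟩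
  have hev : ∀ᶠ k in atTop, ‖x k - xb‖ ≤ K * C ^ (1 - 1 / 2 : ℝ) * (c ^ (1 - 1 / 2 : ℝ)) ^ k := by
    filter_upwards [eventually_ge_atTop N] with k hk
    calc ‖x k - xb‖ ≤ K * r k ^ (1 - 1 / 2 : ℝ) := (hN k hk).2.2
      _ ≤ K * (C * c ^ k) ^ (1 - 1 / 2 : ℝ) := by
        gcongr
        exacts [(hN k hk).1, hgeo k hk]
      _ = K * C ^ (1 - 1 / 2 : ℝ) * (c ^ (1 - 1 / 2 : ℝ)) ^ k := by
        rw [Real.mul_rpow hC (by positivity), Real.rpow_pow_comm hc₀.le, mul_assoc]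
  obtain ⟨C', hC', hbound⟩ := exists_forall_le_mul_pow_of_eventually hsqrt.1 hev
  exact ⟨C', hC', _, hsqrt, hbound⟩

theorem exists_le_rpow_of_rate_recursion (hq : 1 / 2 < q) (hq₁ : q ≤ 1) (hA : 0 < A)
    (hK : 0 < K)
    (h : ∀ᶠ k in atTop, 0 ≤ r k ∧ r k ^ (2 * q) ≤ A * (r k - r (k + 1)) ∧
      ‖x k - xb‖ ≤ K * r k ^ (1 - q)) :
    ∃ C > (0 : ℝ), ∃ N : ℕ, ∀ k ≥ N, ‖x k - xb‖ ≤ C * (k : ℝ) ^ (-(1 - q) / (2 * q - 1)) := by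
  obtain ⟨N, hN⟩ := eventually_atTop.1 h
  obtain ⟨C, hC, hpow⟩ := exists_le_rpow_of_rpow_le_mul_sub (by linarith) (by linarith) hA
    (fun k hk ↦ (hN k hk).1) (fun k hk ↦ (hN k hk).2.1)
  obtain ⟨N', hN'⟩ := eventually_atTop.1 ((eventually_ge_atTop N).and hpow)
  refine ⟨K * C ^ (1 - q), by positivity, N', fun k hk ↦ ?_⟩
  obtain ⟨hkN, hrk⟩ := hN' k hk
  calc ‖x k - xb‖ ≤ K * r k ^ (1 - q) := (hN k hkN).2.2
    _ ≤ K * (C * (k : ℝ) ^ (1 - 2 * q)⁻¹) ^ (1 - q) := by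
      gcongr
      exact (hN k hkN).1
    _ = K * C ^ (1 - q) * (k : ℝ) ^ (-(1 - q) / (2 * q - 1)) := by
      rw [Real.mul_rpow hC.le (by positivity), ← Real.rpow_mul (by positivity), mul_assoc]
      congr 3
      rw [show 1 - 2 * q = -(2 * q - 1) by ring, inv_neg, neg_div, div_eq_mul_inv]
      ring

end Descent

/-- Convergence rates under the exponential PLK condition for a sequence of iterates
satisfying a sufficient decrease condition and a relative gradient bound. -/
theorem rates_of_expPLK {n : ℕ}
    (f : EuclideanSpace ℝ (Fin n) → ℝ) (hf : ContDiff ℝ 1 f)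
    (x : ℕ → EuclideanSpace ℝ (Fin n)) (α β : ℝ) (hα : 0 < α) (hβ : 0 < β)
    (hdec : ∃ N : ℕ, ∀ k ≥ N, α * ‖x (k+1) - x k‖^2 ≤ f (x k) - f (x (k+1)))
    (hgrad : ∃ N : ℕ, ∀ k ≥ N, ‖gradient f (x k)‖ ≤ β * ‖x (k+1) - x k‖)
    (xb : EuclideanSpace ℝ (Fin n))
    (hacc : MapClusterPt xb atTop x)
    (M q : ℝ) (hM : 0 < M) (hq : q ∈ Set.Ioo (0:ℝ) 1)
    (hPLK : ExpPLKCondition f xb M q) :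
    (q < 1/2 → ∃ N : ℕ, ∀ k ≥ N, x k = xb) ∧
    (q = 1/2 → ∃ C > (0:ℝ), ∃ c ∈ Set.Ioo (0:ℝ) 1, ∀ k : ℕ, ‖x k - xb‖ ≤ C * c ^ k) ∧
    (1/2 < q → ∃ C > (0:ℝ), ∃ N : ℕ, ∀ k ≥ N,
      ‖x k - xb‖ ≤ C * (k : ℝ) ^ (-(1 - q) / (2*q - 1))) := by
  obtain ⟨N₁, hdec⟩ := hdec
  obtain ⟨N₂, hgrad⟩ := hgrad
  obtain ⟨η, U, hη, hU, hPLK⟩ := hPLK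
  obtain ⟨hr, hrec⟩ := eventually_rate_recursion_of_plk (G := fun y ↦ ‖gradient f y‖)
    hf.continuous.continuousAt hacc hα hβ hM.le hq hη hU
    (fun k hk ↦ hdec k (le_of_max_le_left hk)) (fun k hk ↦ hgrad k (le_of_max_le_right hk)) hPLK
  have hA : 0 < (M * (1 - q) * β) ^ 2 / α := by
    have : 0 < 1 - q := sub_pos.2 hq.2
    positivity
  exact ⟨fun hq' ↦ exists_forall_ge_eq_of_rate_recursion hq' hA.le hr hrec,
    fun hq' ↦ exists_le_geometric_of_rate_recursion hq' hA (by positivity) hrec,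
    fun hq' ↦ exists_le_rpow_of_rate_recursion hq' hq.2.le hA (by positivity) hrec⟩
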